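/- arXiv:2502.09279 — 2 statements merged into one kernel-verified Lean document; each statement's English description precedes it below -/
import Mathlib

section
/- Let X be a set and k ≥ 1 a natural number, and let ℱ be a finite family of predicates on k-tuples from X. Then there exists a finite subset L₁ ⊆ X with |L₁| ≤ 2·|ℱ| such that for every f ∈ ℱ both equivalences hold: Alt∃(X, X, …, X; f) ↔ Alt∃(L₁, X, …, X; f) and Alt∀(X, X, …, X; f) ↔ Alt∀(L₁, X, …, X; f). (This is the induction basis i = 1 of the quantifier-range restriction lemma: the range of the outermost quantifier can be replaced by a finite set of size at most 2|ℱ| without changing the truth value of any of the finitely many alternating quantified sentences.) -/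
namespace Stmt0

/-- Alternating quantified statement: `Alt b k S f` where `b = true` starts with `∃`
and `b = false` starts with `∀`; the `j`-th quantified variable ranges over `S j`. -/
def Alt {X : Type*} : Bool → (k : ℕ) → (Fin k → Set X) → ((Fin k → X) → Prop) → Prop
  | _, 0, _, f => f finZeroElim
  | b, (k + 1), S, f =>
    if b then ∃ u ∈ S 0, Alt (!b) k (fun i => S i.succ) (fun v => f (Fin.cons u v))
    else ∀ u ∈ S 0, Alt (!b) k (fun i => S i.succ) (fun v => f (Fin.cons u v))

lemma Alt_true_succ {X : Type*} (k : ℕ) (S : Fin (k+1) → Set X) (f : (Fin (k+1) → X) → Prop) :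
    Alt true (k+1) S f ↔
      ∃ u ∈ S 0, Alt false k (fun i => S i.succ) (fun v => f (Fin.cons u v)) := by
  simp [Alt]

lemma Alt_false_succ {X : Type*} (k : ℕ) (S : Fin (k+1) → Set X) (f : (Fin (k+1) → X) → Prop) :
    Alt false (k+1) S f ↔
      ∀ u ∈ S 0, Alt true k (fun i => S i.succ) (fun v => f (Fin.cons u v)) := by
  simp [Alt]

/-- Induction basis of the quantifier-range restriction lemma: the range of the
outermost quantifier can be replaced by a finite set `L₁` with `|L₁| ≤ 2·|ℱ|`. -/
theorem quantifier_range_restriction_base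
    {X : Type*} {ι : Type*} (k : ℕ) (hk : 1 ≤ k)
    (F : Finset ι) (f : ι → (Fin k → X) → Prop) :
    ∃ L : Finset X, L.card ≤ 2 * F.card ∧
      ∀ j ∈ F,
        (Alt true k (fun _ => Set.univ) (f j) ↔
          Alt true k (fun m : Fin k => if (m : ℕ) = 0 then (↑L : Set X) else Set.univ) (f j)) ∧
        (Alt false k (fun _ => Set.univ) (f j) ↔
          Alt false k (fun m : Fin k => if (m : ℕ) = 0 then (↑L : Set X) else Set.univ) (f j)) := by
  classical
  obtain ⟨k', rfl⟩ : ∃ k', k = k' + 1 := ⟨k - 1, (Nat.succ_pred_eq_of_pos hk).symm⟩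
  set TE : ι → X → Prop := fun j u =>
    Alt false k' (fun _ => Set.univ) (fun v => f j (Fin.cons u v)) with hTE
  set TA : ι → X → Prop := fun j u =>
    Alt true k' (fun _ => Set.univ) (fun v => f j (Fin.cons u v)) with hTA
  have ge : ∀ j : ι, ∃ s : Finset X, s.card ≤ 2 ∧
      ((∃ u, TE j u) → ∃ u ∈ s, TE j u) ∧
      ((∃ u, ¬ TA j u) → ∃ u ∈ s, ¬ TA j u) := by
    intro j
    by_cases h1 : ∃ u, TE j u <;> by_cases h2 : ∃ u, ¬ TA j u
    · exact ⟨{h1.choose, h2.choose}, Finset.card_insert_le _ _ |>.trans (by simp),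
        fun _ => ⟨h1.choose, by simp, h1.choose_spec⟩,
        fun _ => ⟨h2.choose, by simp, h2.choose_spec⟩⟩
    · exact ⟨{h1.choose}, by simp, fun _ => ⟨h1.choose, by simp, h1.choose_spec⟩,
        fun h => absurd h h2⟩
    · exact ⟨{h2.choose}, by simp, fun h => absurd h h1,
        fun _ => ⟨h2.choose, by simp, h2.choose_spec⟩⟩
    · exact ⟨∅, by simp, fun h => absurd h h1, fun h => absurd h h2⟩
  choose g hcard hE hA using ge
  refine ⟨F.biUnion g, ?_, ?_⟩
  · calc (F.biUnion g).card ≤ ∑ j ∈ F, (g j).card := Finset.card_biUnion_le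
      _ ≤ ∑ _j ∈ F, 2 := Finset.sum_le_sum fun j _ => hcard j
      _ = 2 * F.card := by rw [Finset.sum_const, smul_eq_mul, mul_comm]
  · intro j hj
    have hmem : ∀ u ∈ g j, u ∈ F.biUnion g := fun u hu => Finset.mem_biUnion.mpr ⟨j, hj, hu⟩
    have hS0 : (if ((0 : Fin (k'+1)) : ℕ) = 0 then (↑(F.biUnion g) : Set X) else Set.univ)
        = (↑(F.biUnion g) : Set X) := by simp
    have hStail : (fun i : Fin k' =>
        if ((Fin.succ i : Fin (k'+1)) : ℕ) = 0 then (↑(F.biUnion g) : Set X) else Set.univ)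
        = fun _ => Set.univ := by
      funext i; simp [Fin.val_succ]
    constructor
    · rw [Alt_true_succ, Alt_true_succ, hS0, hStail]
      constructor
      · rintro ⟨u, -, hu⟩
        obtain ⟨u', hu', hTu'⟩ := hE j ⟨u, hu⟩
        exact ⟨u', hmem u' hu', hTu'⟩
      · rintro ⟨u, -, hu⟩
        exact ⟨u, Set.mem_univ u, hu⟩
    · rw [Alt_false_succ, Alt_false_succ, hS0, hStail]
      constructor
      · intro h u _
        exact h u (Set.mem_univ u)
      · intro h u _
        by_contra hc
        obtain ⟨u', hu', hTu'⟩ := hA j ⟨u, hc⟩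
        exact hTu' (h u' (hmem u' hu'))

end Stmt0
end

section
/- Lebesgue density theorem on Cantor space: for every measurable set A ⊆ Ω, for μ-almost every x ∈ A, the cylinder densities of A at x converge to 1, i.e., lim_{n→∞} μ(A ∩ [x↾n]) / μ([x↾n]) = 1. -/
/-!
Conditioning on the first `n` coordinates is conditioning on the countable partition into
cylinders of length `n`, so the conditional expectation of `1_A` at `x` is the cylinder
density `μ(A ∩ [x↾n]) / μ([x↾n])`. These σ-algebras form a filtration generating the
product σ-algebra, so Lévy's upward theorem makes the densities converge to `1_A` almost
everywhere.
-/

open MeasureTheory ProbabilityTheory Filter Set Topology Preorder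

namespace Stmt3

/-- The basic cylinder `[x↾n]` in Cantor space: all sequences agreeing with `x`
on the first `n` coordinates. -/
def cyl (x : ℕ → Bool) (n : ℕ) : Set (ℕ → Bool) := {y | ∀ i < n, y i = x i}

/-- `μ` is the fair-coin measure on Cantor space `ℕ → Bool` (the infinite product of
uniform measures on `Bool`): it is a probability measure whose coordinates are
independent and each coordinate is a fair coin. -/
def IsFairCoin (μ : Measure (ℕ → Bool)) : Prop :=
  IsProbabilityMeasure μ ∧
    iIndepFun (fun n (y : ℕ → Bool) => y n) μ ∧
    ∀ (n : ℕ) (b : Bool), μ {y | y n = b} = 1 / 2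

end Stmt3

section CountableFibers

variable {Ω β E : Type*} {mΩ : MeasurableSpace Ω} [mβ : MeasurableSpace β] [Countable β]
  [MeasurableSingletonClass β] {μ : Measure Ω} {p : Ω → β}

lemma ae_measure_fiber_ne_zero (hp : Measurable p) : ∀ᵐ x ∂μ, μ (p ⁻¹' {p x}) ≠ 0 := by
  have h : ∀ᵐ b ∂μ.map p, μ.map p {b} ≠ 0 := ae_iff_of_countable.2 fun _ hb => hb
  filter_upwards [ae_of_ae_map hp.aemeasurable h] with x hx
  rwa [Measure.map_apply hp (measurableSet_singleton _)] at hx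

lemma condExp_comap_ae_eq_integral_cond [NormedAddCommGroup E] [NormedSpace ℝ E]
    [CompleteSpace E] [IsFiniteMeasure μ] (hp : Measurable p) {f : Ω → E}
    (hf : Integrable f μ) :
    μ[f | mβ.comap p] =ᵐ[μ] fun x => ∫ y, f y ∂μ[|p ← p x] := by
  have hm : mβ.comap p ≤ mΩ := hp.comap_le
  have hconst : (μ[f | mβ.comap p]).FactorsThrough p := stronglyMeasurable_condExp.factorsThrough
  filter_upwards [ae_measure_fiber_ne_zero hp] with x hx
  set s := p ⁻¹' {p x}
  have hs : MeasurableSet[mβ.comap p] s := ⟨_, measurableSet_singleton _, rfl⟩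
  have hsx : μ.real s ≠ 0 := (measureReal_ne_zero_iff (measure_ne_top μ s)).2 hx
  have hfiber : ∫ y in s, μ[f | mβ.comap p] y ∂μ = ∫ y in s, f y ∂μ :=
    setIntegral_condExp hm hf hs
  rw [setIntegral_congr_fun (hm _ hs) (fun y hy => hconst hy), setIntegral_const] at hfiber
  rw [ProbabilityTheory.cond, integral_smul_measure, ← hfiber, smul_smul, ENNReal.toReal_inv,
    ← measureReal_def, inv_mul_cancel₀ hsx, one_smul]

end CountableFibers

lemma iSup_piLE {ι : Type*} [Preorder ι] {X : ι → Type*} [∀ i, MeasurableSpace (X i)] :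
    ⨆ i, Filtration.piLE (X := X) i = MeasurableSpace.pi := by
  refine le_antisymm (iSup_le Filtration.piLE.le) (iSup_le fun i => ?_)
  have hrestrict : Measurable[Filtration.piLE i] (restrictLe (π := X) i) :=
    Measurable.of_comap_le le_rfl
  exact ((measurable_pi_apply (⟨i, mem_Iic.2 le_rfl⟩ : Iic i)).comp hrestrict).comap_le.trans
    (le_iSup _ i)

theorem ae_tendsto_cond_restrictLe {X : ℕ → Type*} [∀ i, MeasurableSpace (X i)]
    [∀ i, Countable (X i)] [∀ i, MeasurableSingletonClass (X i)] {μ : Measure (Π i, X i)}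
    [IsFiniteMeasure μ] {A : Set (Π i, X i)} (hA : MeasurableSet A) :
    ∀ᵐ x ∂μ, x ∈ A → Tendsto (fun n => μ[A | restrictLe n ← restrictLe n x]) atTop (𝓝 1) := by
  set f : (Π i, X i) → ℝ := A.indicator 1
  have hint : Integrable f μ := (integrable_const 1).indicator hA
  have hmeas : StronglyMeasurable[⨆ n, Filtration.piLE n] f := by
    rw [iSup_piLE]; exact stronglyMeasurable_const.indicator hA
  filter_upwards [hint.tendsto_ae_condExp (ℱ := Filtration.piLE) hmeas, ae_all_iff.2 fun n =>
    condExp_comap_ae_eq_integral_cond (measurable_restrictLe n) hint] with x hlim hcond hxA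
  refine (ENNReal.tendsto_toReal_iff (fun _ => measure_ne_top _ _) ENNReal.one_ne_top).1 ?_
  have hfx : f x = 1 := indicator_of_mem hxA 1
  rw [ENNReal.toReal_one, ← hfx]
  refine hlim.congr fun n => (hcond n).trans ?_
  rw [integral_indicator_one hA, measureReal_def]

namespace Stmt3

lemma preimage_restrictLe_singleton_eq_cyl (x : ℕ → Bool) (n : ℕ) :
    restrictLe (π := fun _ => Bool) n ⁻¹' {restrictLe n x} = cyl x (n + 1) := by
  ext y
  simp [funext_iff, cyl]

/-- Lebesgue density theorem on Cantor space: for every measurable `A`, for μ-almost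
every `x ∈ A` the cylinder densities of `A` at `x` converge to `1`. -/
theorem lebesgue_density_cantor (μ : Measure (ℕ → Bool)) (hμ : IsFairCoin μ)
    (A : Set (ℕ → Bool)) (hA : MeasurableSet A) :
    ∀ᵐ x ∂μ, x ∈ A →
      Filter.Tendsto (fun n => μ (A ∩ cyl x n) / μ (cyl x n)) Filter.atTop (nhds 1) := by
  have : IsProbabilityMeasure μ := hμ.1
  filter_upwards [ae_tendsto_cond_restrictLe hA] with x hx hxA
  rw [← tendsto_add_atTop_iff_nat 1]
  refine (hx hxA).congr fun n => ?_
  have hcyl : MeasurableSet (cyl x (n + 1)) := by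
    rw [← preimage_restrictLe_singleton_eq_cyl]
    exact measurable_restrictLe n (measurableSet_singleton _)
  rw [preimage_restrictLe_singleton_eq_cyl, cond_apply hcyl, inter_comm, ENNReal.div_eq_inv_mul]

end Stmt3
end
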